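/- For any integer k ≥ 2, the function z ↦ z̄^k / z, extended by 0 at z = 0, is of class C^{k−2} on ℂ (regarded as ℝ²). -/

import Mathlib

/-!
The function `z̄^(n+b) / z^b` is homogeneous of degree `n`, so it is bounded by `‖z‖^n`: for
`n ≥ 1` it is continuous at `0`, and for `n ≥ 2` it is differentiable at `0` with derivative `0`.
Away from `0` its Wirtinger derivatives `∂/∂z` and `∂/∂z̄` are constant multiples of
`z̄^(n+b) / z^(b+1)` and `z̄^(n-1+b) / z^b`, both homogeneous of degree `n - 1`. Induction on `n`,
simultaneously for all `b`, gives class `C^(n-1)`; the theorem is the case `b = 1`, `n = k - 1`.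
-/

open Complex ComplexConjugate Filter Topology

noncomputable def conjPowDivPow (n b : ℕ) (z : ℂ) : ℂ :=
  if z = 0 then 0 else conj z ^ (n + b) / z ^ b

/-- `∂f/∂z • dz + ∂f/∂z̄ • dz̄` for `f = conjPowDivPow (n + 1) b`, the Wirtinger derivatives
written through the degree-`n` functions. -/
noncomputable def conjPowDivPowFDeriv (n b : ℕ) (z : ℂ) : ℂ →L[ℝ] ℂ :=
  (-(b : ℂ) * conjPowDivPow n (b + 1) z) • ContinuousLinearMap.id ℝ ℂ
    + ((n + 1 + b : ℂ) * conjPowDivPow n b z) • conjCLE.toContinuousLinearMap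

@[simp]
lemma conjPowDivPow_apply_zero (n b : ℕ) : conjPowDivPow n b 0 = 0 := if_pos rfl

lemma conjPowDivPow_apply_of_ne_zero (n b : ℕ) {z : ℂ} (hz : z ≠ 0) :
    conjPowDivPow n b z = conj z ^ (n + b) / z ^ b := if_neg hz

lemma conjPowDivPow_eventuallyEq (n b : ℕ) {z : ℂ} (hz : z ≠ 0) :
    conjPowDivPow n b =ᶠ[𝓝 z] fun w => conj w ^ (n + b) * (w ^ b)⁻¹ := by
  filter_upwards [isOpen_ne.mem_nhds hz] with w hw
  rw [conjPowDivPow_apply_of_ne_zero n b hw, div_eq_mul_inv]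

lemma norm_conjPowDivPow_le (n b : ℕ) (z : ℂ) : ‖conjPowDivPow n b z‖ ≤ ‖z‖ ^ n := by
  rcases eq_or_ne z 0 with rfl | hz
  · simp
  · rw [conjPowDivPow_apply_of_ne_zero n b hz, norm_div, norm_pow, norm_pow, RCLike.norm_conj,
      pow_add, mul_div_cancel_right₀ _ (pow_ne_zero _ (norm_ne_zero_iff.2 hz))]

lemma continuous_conjPowDivPow (n b : ℕ) : Continuous (conjPowDivPow (n + 1) b) := by
  refine continuous_iff_continuousAt.2 fun z => ?_
  rcases eq_or_ne z 0 with rfl | hz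
  · rw [ContinuousAt, conjPowDivPow_apply_zero]
    refine squeeze_zero_norm (norm_conjPowDivPow_le (n + 1) b) ?_
    simpa using ((continuous_norm (E := ℂ)).tendsto 0).pow (n + 1)
  · refine ContinuousAt.congr ?_ (conjPowDivPow_eventuallyEq _ b hz).symm
    fun_prop (disch := exact pow_ne_zero _ hz)

lemma hasFDerivAt_conjPowDivPow_zero (n b : ℕ) :
    HasFDerivAt (conjPowDivPow (n + 2) b) (0 : ℂ →L[ℝ] ℂ) 0 := by
  refine hasFDerivAt_iff_isLittleO_nhds_zero.2 ?_
  simp only [zero_add, conjPowDivPow_apply_zero, sub_zero, zero_apply]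
  refine (Asymptotics.isBigO_of_le _ fun z => ?_).trans_isLittleO
    (Asymptotics.isLittleO_norm_pow_id (n := n + 2) (by omega))
  simpa using norm_conjPowDivPow_le (n + 2) b z

lemma hasFDerivAt_conjPowDivPow_of_ne_zero (n b : ℕ) {z : ℂ} (hz : z ≠ 0) :
    HasFDerivAt (conjPowDivPow (n + 1) b) (conjPowDivPowFDeriv n b z) z := by
  have hconj := ((hasDerivAt_pow (n + 1 + b) (conj z)).hasFDerivAt.restrictScalars ℝ).comp z
    conjCLE.hasFDerivAt
  have hinv := ((hasDerivAt_pow b z).inv (pow_ne_zero _ hz)).hasFDerivAt.restrictScalars ℝ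
  refine ((hconj.mul hinv).congr_of_eventuallyEq
    (conjPowDivPow_eventuallyEq _ b hz)).congr_fderiv ?_
  ext w
  simp only [conjPowDivPowFDeriv, conjPowDivPow_apply_of_ne_zero _ _ hz, add_apply, smul_apply,
    ContinuousLinearMap.comp_apply, ContinuousLinearMap.coe_restrictScalars',
    ContinuousLinearMap.toSpanSingleton_apply, ContinuousLinearMap.id_apply,
    ContinuousLinearEquiv.coe_coe, conjCLE_apply, smul_eq_mul, Function.comp_apply, Pi.inv_apply,
    show n + 1 + b - 1 = n + b by omega]
  push_cast
  -- `hasDerivAt_pow` has the factor `z ^ (b - 1)`, with truncated subtraction at `b = 0`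
  obtain _ | b := b
  · field_simp
    ring
  · simp only [Nat.add_sub_cancel]
    field_simp
    ring

lemma hasFDerivAt_conjPowDivPow (n b : ℕ) (z : ℂ) :
    HasFDerivAt (conjPowDivPow (n + 2) b) (conjPowDivPowFDeriv (n + 1) b z) z := by
  rcases eq_or_ne z 0 with rfl | hz
  · convert hasFDerivAt_conjPowDivPow_zero n b using 1
    ext w
    simp [conjPowDivPowFDeriv]
  · exact hasFDerivAt_conjPowDivPow_of_ne_zero (n + 1) b hz

theorem contDiff_conjPowDivPow (m b : ℕ) : ContDiff ℝ m (conjPowDivPow (m + 1) b) := by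
  induction m generalizing b with
  | zero => exact contDiff_zero.2 (continuous_conjPowDivPow 0 b)
  | succ m ih =>
    refine contDiff_succ_iff_hasFDerivAt.2
      ⟨conjPowDivPowFDeriv (m + 1) b, ?_, hasFDerivAt_conjPowDivPow m b⟩
    exact ((contDiff_const.mul (ih (b + 1))).smul contDiff_const).add
      ((contDiff_const.mul (ih b)).smul contDiff_const)

theorem conj_pow_div_contDiff (k : ℕ) (hk : 2 ≤ k) :
    ContDiff ℝ ((k - 2 : ℕ) : ℕ∞)
      (fun z : ℂ => if z = 0 then 0 else (starRingEnd ℂ z) ^ k / z) := by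
  have hfun : conjPowDivPow (k - 2 + 1) 1 =
      fun z : ℂ => if z = 0 then 0 else (starRingEnd ℂ z) ^ k / z := by
    funext z
    rw [conjPowDivPow, show k - 2 + 1 + 1 = k by omega, pow_one]
  exact_mod_cast hfun ▸ contDiff_conjPowDivPow (k - 2) 1
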